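/- arXiv:2107.01165 — 3 statements merged into one kernel-verified Lean document; each statement's English description precedes it below -/
import Mathlib

section
/- Finsler's Lemma (constant-matrix version): Let Q be a real symmetric n×n matrix and C a real m×n matrix. Then the following are equivalent: (i) for every z ∈ ℝⁿ with z ≠ 0 and Cz = 0 one has zᵀQz > 0; (ii) there exists a real n×m matrix L such that Q + LC + CᵀLᵀ is positive definite. -/
open Matrix

/-- Finsler's Lemma (constant-matrix version). -/
theorem finsler_lemma (n m : ℕ)
    (Q : Matrix (Fin n) (Fin n) ℝ) (hQ : Q.IsSymm)
    (C : Matrix (Fin m) (Fin n) ℝ) :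
    (∀ z : Fin n → ℝ, z ≠ 0 → C.mulVec z = 0 → 0 < z ⬝ᵥ Q.mulVec z) ↔
    (∃ L : Matrix (Fin n) (Fin m) ℝ,
      ∀ z : Fin n → ℝ, z ≠ 0 → 0 < z ⬝ᵥ (Q + L * C + Cᵀ * Lᵀ).mulVec z) := by
  set f : (Fin n → ℝ) → ℝ := fun z => z ⬝ᵥ Q.mulVec z with hf
  set g : (Fin n → ℝ) → ℝ := fun z => (C.mulVec z) ⬝ᵥ (C.mulVec z) with hg
  have hgnn : ∀ z, 0 ≤ g z := fun z => Finset.sum_nonneg fun i _ => mul_self_nonneg _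
  have hfc : Continuous f := by
    simp only [hf, dotProduct, Matrix.mulVec]
    fun_prop
  have hgc : Continuous g := by
    simp only [hg, dotProduct, Matrix.mulVec]
    fun_prop
  constructor
  · intro hyp
    -- claim: exists c with f z + c * g z > 0 on the sphere
    have claim : ∃ c : ℝ, ∀ z : Fin n → ℝ, ‖z‖ = 1 → 0 < f z + c * g z := by
      by_contra hcon
      push_neg at hcon
      set A : ℕ → Set (Fin n → ℝ) := fun k => {z | ‖z‖ = 1 ∧ f z + (k : ℝ) * g z ≤ 0} with hA
      have hsub : ∀ k, A k ⊆ Metric.sphere (0 : Fin n → ℝ) 1 := by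
        intro k z hz
        simpa [Metric.mem_sphere, dist_eq_norm] using hz.1
      have hclosed : ∀ k, IsClosed (A k) := by
        intro k
        have h1 : IsClosed {z : Fin n → ℝ | ‖z‖ = 1} :=
          isClosed_eq (continuous_norm) continuous_const
        have h2 : IsClosed {z : Fin n → ℝ | f z + (k : ℝ) * g z ≤ 0} :=
          isClosed_le (by fun_prop) continuous_const
        exact h1.inter h2
      have hanti : ∀ j k : ℕ, j ≤ k → A k ⊆ A j := by
        intro j k hjk z hz
        have hjk' : (j:ℝ) ≤ (k:ℝ) := by exact_mod_cast hjk
        refine ⟨hz.1, le_trans (by nlinarith [hgnn z, hjk']) hz.2⟩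
      have hmono : Directed (· ⊇ ·) A := fun j k =>
        ⟨max j k, hanti j _ (le_max_left _ _), hanti k _ (le_max_right _ _)⟩
      have hne : ∀ k, (A k).Nonempty := by
        intro k
        obtain ⟨z, hz1, hz2⟩ := hcon (k : ℝ)
        exact ⟨z, hz1, hz2⟩
      have hcomp : ∀ k, IsCompact (A k) :=
        fun k => (isCompact_sphere 0 1).of_isClosed_subset (hclosed k) (hsub k)
      obtain ⟨z, hz⟩ := IsCompact.nonempty_iInter_of_directed_nonempty_isCompact_isClosed
        A hmono hne hcomp hclosed
      simp only [Set.mem_iInter] at hz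
      have hz1 : ‖z‖ = 1 := (hz 0).1
      have hzne : z ≠ 0 := by
        intro h; rw [h] at hz1; simp at hz1
      have hg0 : g z = 0 := by
        by_contra hgne
        have hgpos : 0 < g z := lt_of_le_of_ne (hgnn z) (Ne.symm hgne)
        obtain ⟨k, hk⟩ := exists_nat_gt ((-f z) / g z)
        have := (hz k).2
        have : (-f z) / g z < (k : ℝ) := hk
        rw [div_lt_iff₀ hgpos] at this
        linarith [(hz k).2]
      have hCz : C.mulVec z = 0 := dotProduct_self_eq_zero.mp hg0
      have := hyp z hzne hCz
      have h0 := (hz 0).2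
      simp only [Nat.cast_zero, zero_mul, add_zero] at h0
      linarith
    obtain ⟨c, hc⟩ := claim
    refine ⟨(c / 2) • Cᵀ, ?_⟩
    intro z hz
    have key : z ⬝ᵥ (Q + (c / 2) • Cᵀ * C + Cᵀ * ((c / 2) • Cᵀ)ᵀ).mulVec z
        = f z + c * g z := by
      simp only [transpose_smul, transpose_transpose, Matrix.smul_mul, Matrix.mul_smul,
        Matrix.add_mulVec, Matrix.smul_mulVec, dotProduct_add, dotProduct_smul,
        smul_eq_mul, hf, hg]
      rw [← Matrix.mulVec_mulVec, Matrix.dotProduct_mulVec z Cᵀ, Matrix.vecMul_transpose]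
      ring
    rw [key]
    -- scale to unit sphere
    have hnz : ‖z‖ ≠ 0 := norm_ne_zero_iff.mpr hz
    set w : Fin n → ℝ := ‖z‖⁻¹ • z with hw
    have hw1 : ‖w‖ = 1 := by
      rw [hw, norm_smul]
      simp [hnz]
    have hfw : f z = ‖z‖ ^ 2 * f w := by
      simp only [hf, hw, Matrix.mulVec_smul, smul_dotProduct, dotProduct_smul, smul_eq_mul]
      field_simp
    have hgw : g z = ‖z‖ ^ 2 * g w := by
      simp only [hg, hw, Matrix.mulVec_smul, smul_dotProduct, dotProduct_smul, smul_eq_mul]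
      field_simp
    have hwpos := hc w hw1
    have hn2 : 0 < ‖z‖ ^ 2 := by positivity
    rw [hfw, hgw]
    nlinarith
  · rintro ⟨L, hL⟩ z hz hCz
    have := hL z hz
    have key : z ⬝ᵥ (Q + L * C + Cᵀ * Lᵀ).mulVec z = z ⬝ᵥ Q.mulVec z := by
      simp only [Matrix.add_mulVec, dotProduct_add]
      rw [← Matrix.mulVec_mulVec, hCz, ← Matrix.mulVec_mulVec,
        Matrix.dotProduct_mulVec z Cᵀ, Matrix.vecMul_transpose, hCz]
      simp
    rw [key] at this
    exact this
end

section
/- Pointwise Lyapunov decrease under the gain-scheduled static output feedback (core of Theorem 1): In the setting of the previous statement (matrices P, R, Hᵢ, Qᵢ, Sᵢ, A₁, A₂, A₃, C₁, C₂, Υ_{1i}, Υ_{2i}, Υ_{3i}, C_{di}, Yᵢ as there, with P ≻ 0, R ≻ 0, Hᵢ ≻ 0), suppose in addition that, given a scalar β, for every i = 1,…,N the matrix X_{di} + L_sC_{si} + C_{si}ᵀL_sᵀ is negative definite, where X_{di} = [[Qᵢ, Sᵢ], [Sᵢᵀ, R]], C_{si} = [Sᵢᵀ R], and L_s is the (p+m)×m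 matrix whose top p×m block is β times the all-ones matrix and whose bottom m×m block is −I, and suppose there exists L with Yᵢ + LC_{di} + C_{di}ᵀLᵀ ≺ 0 for all i. Then for every α ∈ ℝᴺ with αᵢ ≥ 0 and Σᵢ αᵢ = 1, and every (x, π) ∈ ℝⁿ × ℝ^{nπ}, setting y = C₁x + C₂π, u = −R⁻¹(Σᵢ αᵢSᵢ)ᵀy, if (x, π, u) ≠ 0 and Σᵢ αᵢ(Υ_{1i}x + Υ_{2i}π + Υ_{3i}u) = 0, then 2xᵀP(A₁x + A₂π + A₃u) < 0. -/
/-!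
Average the two families of LMIs with the weights `α`. On `z = (x, π, u)` the multiplier terms
`L C_{di} + C_{di}ᵀ Lᵀ` drop out of the averaged quadratic form because `∑ αᵢ C_{di} z = 0`,
so `∑ αᵢ zᵀ Yᵢ z < 0`. On `w = (y, u)` the feedback law gives
`∑ αᵢ C_{si} w = S_αᵀ y + R u = 0`, so likewise `∑ αᵢ wᵀ X_{di} w ≤ 0`. Since
`zᵀ Yᵢ z = 2 xᵀ P (A₁ x + A₂ π + A₃ u) + xᵀ Hᵢ x - wᵀ X_{di} w` and `Hᵢ ≻ 0`, the Lyapunov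
derivative is negative.
-/

open Matrix Finset

def NegDef {k : Type*} [Fintype k] (M : Matrix k k ℝ) : Prop :=
  ∀ z : k → ℝ, z ≠ 0 → z ⬝ᵥ M.mulVec z < 0

section

variable {k : Type*} [Fintype k]

theorem NegDef.dotProduct_mulVec_nonpos {M : Matrix k k ℝ} (hM : NegDef M) (z : k → ℝ) :
    z ⬝ᵥ M *ᵥ z ≤ 0 := by
  rcases eq_or_ne z 0 with rfl | hz
  · simp
  · exact (hM z hz).le

theorem Matrix.IsSymm.mulVec_dotProduct {M : Matrix k k ℝ} (hM : M.IsSymm) (a b : k → ℝ) :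
    M *ᵥ a ⬝ᵥ b = a ⬝ᵥ M *ᵥ b := by
  rw [dotProduct_comm, ← dotProduct_transpose_mulVec M a b, hM.eq]

theorem isUnit_det_of_dotProduct_mulVec_pos [DecidableEq k] {R : Matrix k k ℝ}
    (hR : ∀ z : k → ℝ, z ≠ 0 → 0 < z ⬝ᵥ R *ᵥ z) : IsUnit R.det := by
  rw [isUnit_iff_ne_zero, Ne, ← exists_mulVec_eq_zero_iff]
  rintro ⟨v, hv, hRv⟩
  simpa [hRv] using hR v hv

variable {ι : Type*} [Fintype ι] {α : ι → ℝ}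

theorem NegDef.sum_mul_dotProduct_mulVec_nonpos {M : ι → Matrix k k ℝ} (hM : ∀ i, NegDef (M i))
    (hα : ∀ i, 0 ≤ α i) (z : k → ℝ) : ∑ i, α i * (z ⬝ᵥ M i *ᵥ z) ≤ 0 :=
  sum_nonpos fun i _ => mul_nonpos_of_nonneg_of_nonpos (hα i) ((hM i).dotProduct_mulVec_nonpos z)

theorem NegDef.sum_mul_dotProduct_mulVec_neg {M : ι → Matrix k k ℝ} (hM : ∀ i, NegDef (M i))
    (hα : ∀ i, 0 ≤ α i) (hα₀ : 0 < ∑ i, α i) {z : k → ℝ} (hz : z ≠ 0) :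
    ∑ i, α i * (z ⬝ᵥ M i *ᵥ z) < 0 := by
  obtain ⟨j, -, hj⟩ := exists_lt_of_sum_lt (by simpa using hα₀ : ∑ _i : ι, (0 : ℝ) < ∑ i, α i)
  exact sum_neg'
    (fun i _ => mul_nonpos_of_nonneg_of_nonpos (hα i) ((hM i).dotProduct_mulVec_nonpos z))
    ⟨j, mem_univ j, mul_neg_of_pos_of_neg hj (hM j z hz)⟩

variable {l : Type*} [Fintype l]

theorem dotProduct_mulVec_add_mul_add_transpose (M : Matrix k k ℝ) (L : Matrix k l ℝ)
    (C : Matrix l k ℝ) (z : k → ℝ) :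
    z ⬝ᵥ (M + L * C + Cᵀ * Lᵀ) *ᵥ z = z ⬝ᵥ M *ᵥ z + 2 * (Lᵀ *ᵥ z ⬝ᵥ C *ᵥ z) := by
  rw [add_mulVec, add_mulVec, ← mulVec_mulVec, ← mulVec_mulVec, dotProduct_add, dotProduct_add,
    dotProduct_mulVec z L, ← mulVec_transpose, dotProduct_mulVec z Cᵀ, vecMul_transpose,
    dotProduct_comm (C *ᵥ z)]
  ring

theorem sum_mul_dotProduct_mulVec_add_mul_add_transpose (M : ι → Matrix k k ℝ) (L : Matrix k l ℝ)
    {C : ι → Matrix l k ℝ} {z : k → ℝ} (hCz : ∑ i, α i • C i *ᵥ z = 0) :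
    ∑ i, α i * (z ⬝ᵥ (M i + L * C i + (C i)ᵀ * Lᵀ) *ᵥ z) = ∑ i, α i * (z ⬝ᵥ M i *ᵥ z) := by
  have hcross : ∑ i, α i * (2 * (Lᵀ *ᵥ z ⬝ᵥ C i *ᵥ z)) = 2 * (Lᵀ *ᵥ z ⬝ᵥ ∑ i, α i • C i *ᵥ z) := by
    simp only [dotProduct_sum, dotProduct_smul, smul_eq_mul, mul_sum]
    exact sum_congr rfl fun i _ => by ring
  simp only [dotProduct_mulVec_add_mul_add_transpose, mul_add, sum_add_distrib, hcross, hCz,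
    dotProduct_zero, mul_zero, add_zero]

end

theorem sum_smul_fromCols_mulVec_eq_zero {ι p m : Type*} [Fintype ι] [Fintype p] [Fintype m]
    {α : ι → ℝ} (hα : ∑ i, α i = 1) (S : ι → Matrix p m ℝ) (R : Matrix m m ℝ) {y : p → ℝ}
    {u : m → ℝ} (hu : R *ᵥ u = -((∑ i, α i • S i)ᵀ *ᵥ y)) :
    ∑ i, α i • fromCols (S i)ᵀ R *ᵥ Sum.elim y u = 0 := by
  simp [smul_add, sum_add_distrib, ← sum_smul, hα, hu, transpose_sum,
    sum_mulVec, transpose_smul, smul_mulVec]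


theorem sumElim_dotProduct_fromBlocks_mulVec_sumElim {n q m p : Type*} [Fintype n] [Fintype q]
    [Fintype m] [Fintype p] {P : Matrix n n ℝ} (hP : P.IsSymm) (H : Matrix n n ℝ)
    {Q : Matrix p p ℝ} (hQ : Q.IsSymm) (S : Matrix p m ℝ) (R : Matrix m m ℝ)
    (A₁ : Matrix n n ℝ) (A₂ : Matrix n q ℝ) (A₃ : Matrix n m ℝ)
    (C₁ : Matrix p n ℝ) (C₂ : Matrix p q ℝ) (x : n → ℝ) (v : q → ℝ) (u : m → ℝ) :
    Sum.elim x (Sum.elim v u) ⬝ᵥ fromBlocks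
      (P * A₁ + A₁ᵀ * P - C₁ᵀ * Q * C₁ + H)
      (fromCols (P * A₂ - C₁ᵀ * Q * C₂) (P * A₃ - C₁ᵀ * S))
      (fromRows (P * A₂ - C₁ᵀ * Q * C₂)ᵀ (P * A₃ - C₁ᵀ * S)ᵀ)
      (fromBlocks (-(C₂ᵀ * Q * C₂)) (-(C₂ᵀ * S)) (-(C₂ᵀ * S))ᵀ (-R)) *ᵥ Sum.elim x (Sum.elim v u)
    = 2 * (x ⬝ᵥ P *ᵥ (A₁ *ᵥ x + A₂ *ᵥ v + A₃ *ᵥ u)) + x ⬝ᵥ H *ᵥ x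
      - Sum.elim (C₁ *ᵥ x + C₂ *ᵥ v) u ⬝ᵥ
          fromBlocks Q S Sᵀ R *ᵥ Sum.elim (C₁ *ᵥ x + C₂ *ᵥ v) u := by
  simp only [fromBlocks_mulVec, fromCols_mulVec_sumElim, fromRows_mulVec,
    sumElim_dotProduct_sumElim, add_mulVec, sub_mulVec, neg_mulVec, mulVec_add,
    dotProduct_add, dotProduct_sub, dotProduct_neg, add_dotProduct, transpose_mul,
    transpose_sub, transpose_neg, transpose_transpose, hP.eq, hQ.eq,
    ← mulVec_mulVec, dotProduct_transpose_mulVec, hP.mulVec_dotProduct, hQ.mulVec_dotProduct,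
    Sum.elim_comp_inl, Sum.elim_comp_inr]
  linarith [dotProduct_comm (S *ᵥ u) (C₁ *ᵥ x), dotProduct_comm (S *ᵥ u) (C₂ *ᵥ v)]

theorem pointwise_lyapunov_decrease_general (n nπ m p N : ℕ)
    (P : Matrix (Fin n) (Fin n) ℝ) (hPsymm : P.IsSymm)
    (R : Matrix (Fin m) (Fin m) ℝ)
    (hRpd : ∀ z : Fin m → ℝ, z ≠ 0 → 0 < z ⬝ᵥ R.mulVec z)
    (H : Fin N → Matrix (Fin n) (Fin n) ℝ)
    (hHpd : ∀ i, ∀ z : Fin n → ℝ, z ≠ 0 → 0 < z ⬝ᵥ (H i).mulVec z)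
    (Q : Fin N → Matrix (Fin p) (Fin p) ℝ) (hQsymm : ∀ i, (Q i).IsSymm)
    (S : Fin N → Matrix (Fin p) (Fin m) ℝ)
    (A₁ : Matrix (Fin n) (Fin n) ℝ) (A₂ : Matrix (Fin n) (Fin nπ) ℝ)
    (A₃ : Matrix (Fin n) (Fin m) ℝ)
    (C₁ : Matrix (Fin p) (Fin n) ℝ) (C₂ : Matrix (Fin p) (Fin nπ) ℝ)
    (Υ₁ : Fin N → Matrix (Fin nπ) (Fin n) ℝ)
    (Υ₂ : Fin N → Matrix (Fin nπ) (Fin nπ) ℝ)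
    (Υ₃ : Fin N → Matrix (Fin nπ) (Fin m) ℝ)
    (Cd : Fin N → Matrix (Fin nπ) (Fin n ⊕ (Fin nπ ⊕ Fin m)) ℝ)
    (hCd : ∀ i, Cd i = fromCols (Υ₁ i) (fromCols (Υ₂ i) (Υ₃ i)))
    (Y : Fin N → Matrix (Fin n ⊕ (Fin nπ ⊕ Fin m)) (Fin n ⊕ (Fin nπ ⊕ Fin m)) ℝ)
    (hY : ∀ i, Y i = fromBlocks
      (P * A₁ + A₁ᵀ * P - C₁ᵀ * Q i * C₁ + H i)
      (fromCols (P * A₂ - C₁ᵀ * Q i * C₂) (P * A₃ - C₁ᵀ * S i))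
      (fromRows (P * A₂ - C₁ᵀ * Q i * C₂)ᵀ (P * A₃ - C₁ᵀ * S i)ᵀ)
      (fromBlocks (-(C₂ᵀ * Q i * C₂)) (-(C₂ᵀ * S i)) (-(C₂ᵀ * S i))ᵀ (-R)))
    (Ls : Matrix (Fin p ⊕ Fin m) (Fin m) ℝ)
    (hXd : ∀ i, NegDef (fromBlocks (Q i) (S i) (S i)ᵀ R
      + Ls * fromCols (S i)ᵀ R + (fromCols (S i)ᵀ R)ᵀ * Lsᵀ))
    (hLMI : ∃ L : Matrix (Fin n ⊕ (Fin nπ ⊕ Fin m)) (Fin nπ) ℝ,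
      ∀ i, NegDef (Y i + L * Cd i + (Cd i)ᵀ * Lᵀ)) :
    ∀ α : Fin N → ℝ, (∀ i, 0 ≤ α i) → (∑ i, α i) = 1 →
    ∀ (x : Fin n → ℝ) (piv : Fin nπ → ℝ),
      ∀ y : Fin p → ℝ, y = C₁.mulVec x + C₂.mulVec piv →
      ∀ u : Fin m → ℝ, u = -((R⁻¹ * (∑ i, α i • S i)ᵀ).mulVec y) →
      ¬(x = 0 ∧ piv = 0 ∧ u = 0) →
      (∑ i, α i • ((Υ₁ i).mulVec x + (Υ₂ i).mulVec piv + (Υ₃ i).mulVec u)) = 0 →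
      2 * (x ⬝ᵥ P.mulVec (A₁.mulVec x + A₂.mulVec piv + A₃.mulVec u)) < 0 := by
  obtain ⟨L, hL⟩ := hLMI
  intro α hα hα1 x piv y hy u hu hnz hker
  set z := Sum.elim x (Sum.elim piv u)
  set w := Sum.elim y u
  have hz : z ≠ 0 := fun h => hnz (by simpa [z, funext_iff, Sum.forall] using h)
  have hYneg : ∑ i, α i * (z ⬝ᵥ Y i *ᵥ z) < 0 := by
    have hCdz : ∑ i, α i • Cd i *ᵥ z = 0 := by
      simpa [z, hCd, fromCols_mulVec_sumElim, add_assoc] using hker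
    rw [← sum_mul_dotProduct_mulVec_add_mul_add_transpose Y L hCdz]
    exact NegDef.sum_mul_dotProduct_mulVec_neg hL hα (by simp [hα1]) hz
  have hXnonpos : ∑ i, α i * (w ⬝ᵥ fromBlocks (Q i) (S i) (S i)ᵀ R *ᵥ w) ≤ 0 := by
    have hRu : R *ᵥ u = -((∑ i, α i • S i)ᵀ *ᵥ y) := by
      rw [hu, mulVec_neg, mulVec_mulVec, ← Matrix.mul_assoc,
        mul_nonsing_inv R (isUnit_det_of_dotProduct_mulVec_pos hRpd), Matrix.one_mul]
    rw [← sum_mul_dotProduct_mulVec_add_mul_add_transpose _ Ls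
      (sum_smul_fromCols_mulVec_eq_zero hα1 S R hRu)]
    exact NegDef.sum_mul_dotProduct_mulVec_nonpos hXd hα w
  have hHnonneg : 0 ≤ ∑ i, α i * (x ⬝ᵥ H i *ᵥ x) := by
    refine sum_nonneg fun i _ => mul_nonneg (hα i) ?_
    rcases eq_or_ne x 0 with rfl | hx
    · simp
    · exact (hHpd i x hx).le
  have hsplit : ∀ i, z ⬝ᵥ Y i *ᵥ z = 2 * (x ⬝ᵥ P *ᵥ (A₁ *ᵥ x + A₂ *ᵥ piv + A₃ *ᵥ u))
      + x ⬝ᵥ H i *ᵥ x - w ⬝ᵥ fromBlocks (Q i) (S i) (S i)ᵀ R *ᵥ w := fun i => by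
    rw [hY i]
    subst hy
    exact sumElim_dotProduct_fromBlocks_mulVec_sumElim hPsymm _ (hQsymm i) _ _ _ _ _ _ _ _ _ _
  simp only [hsplit, mul_sub, mul_add, sum_sub_distrib, sum_add_distrib, ← sum_mul, hα1,
    one_mul] at hYneg
  linarith

/-- Pointwise Lyapunov decrease under the gain-scheduled static output feedback
(core of Theorem 1). -/
theorem pointwise_lyapunov_decrease (n nπ m p N : ℕ) (β : ℝ)
    (P : Matrix (Fin n) (Fin n) ℝ) (hPsymm : P.IsSymm)
    (hPpd : ∀ z : Fin n → ℝ, z ≠ 0 → 0 < z ⬝ᵥ P.mulVec z)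
    (R : Matrix (Fin m) (Fin m) ℝ) (hRsymm : R.IsSymm)
    (hRpd : ∀ z : Fin m → ℝ, z ≠ 0 → 0 < z ⬝ᵥ R.mulVec z)
    (H : Fin N → Matrix (Fin n) (Fin n) ℝ) (hHsymm : ∀ i, (H i).IsSymm)
    (hHpd : ∀ i, ∀ z : Fin n → ℝ, z ≠ 0 → 0 < z ⬝ᵥ (H i).mulVec z)
    (Q : Fin N → Matrix (Fin p) (Fin p) ℝ) (hQsymm : ∀ i, (Q i).IsSymm)
    (S : Fin N → Matrix (Fin p) (Fin m) ℝ)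
    (A₁ : Matrix (Fin n) (Fin n) ℝ) (A₂ : Matrix (Fin n) (Fin nπ) ℝ)
    (A₃ : Matrix (Fin n) (Fin m) ℝ)
    (C₁ : Matrix (Fin p) (Fin n) ℝ) (C₂ : Matrix (Fin p) (Fin nπ) ℝ)
    (Υ₁ : Fin N → Matrix (Fin nπ) (Fin n) ℝ)
    (Υ₂ : Fin N → Matrix (Fin nπ) (Fin nπ) ℝ)
    (Υ₃ : Fin N → Matrix (Fin nπ) (Fin m) ℝ)
    (Cd : Fin N → Matrix (Fin nπ) (Fin n ⊕ (Fin nπ ⊕ Fin m)) ℝ)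
    (hCd : ∀ i, Cd i = fromCols (Υ₁ i) (fromCols (Υ₂ i) (Υ₃ i)))
    (Y : Fin N → Matrix (Fin n ⊕ (Fin nπ ⊕ Fin m)) (Fin n ⊕ (Fin nπ ⊕ Fin m)) ℝ)
    (hY : ∀ i, Y i = fromBlocks
      (P * A₁ + A₁ᵀ * P - C₁ᵀ * Q i * C₁ + H i)
      (fromCols (P * A₂ - C₁ᵀ * Q i * C₂) (P * A₃ - C₁ᵀ * S i))
      (fromRows (P * A₂ - C₁ᵀ * Q i * C₂)ᵀ (P * A₃ - C₁ᵀ * S i)ᵀ)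
      (fromBlocks (-(C₂ᵀ * Q i * C₂)) (-(C₂ᵀ * S i)) (-(C₂ᵀ * S i))ᵀ (-R)))
    (Ls : Matrix (Fin p ⊕ Fin m) (Fin m) ℝ)
    (hLs : Ls = fromRows (Matrix.of fun _ _ => β) (-(1 : Matrix (Fin m) (Fin m) ℝ)))
    (hXd : ∀ i, NegDef (fromBlocks (Q i) (S i) (S i)ᵀ R
      + Ls * fromCols (S i)ᵀ R + (fromCols (S i)ᵀ R)ᵀ * Lsᵀ))
    (hLMI : ∃ L : Matrix (Fin n ⊕ (Fin nπ ⊕ Fin m)) (Fin nπ) ℝ,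
      ∀ i, NegDef (Y i + L * Cd i + (Cd i)ᵀ * Lᵀ)) :
    ∀ α : Fin N → ℝ, (∀ i, 0 ≤ α i) → (∑ i, α i) = 1 →
    ∀ (x : Fin n → ℝ) (piv : Fin nπ → ℝ),
      ∀ y : Fin p → ℝ, y = C₁.mulVec x + C₂.mulVec piv →
      ∀ u : Fin m → ℝ, u = -((R⁻¹ * (∑ i, α i • S i)ᵀ).mulVec y) →
      ¬(x = 0 ∧ piv = 0 ∧ u = 0) →
      (∑ i, α i • ((Υ₁ i).mulVec x + (Υ₂ i).mulVec piv + (Υ₃ i).mulVec u)) = 0 →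
      2 * (x ⬝ᵥ P.mulVec (A₁.mulVec x + A₂.mulVec piv + A₃.mulVec u)) < 0 :=
  pointwise_lyapunov_decrease_general n nπ m p N P hPsymm R hRpd H hHpd Q hQsymm S A₁ A₂ A₃ C₁ C₂ Υ₁
    Υ₂ Υ₃ Cd hCd Y hY Ls hXd hLMI
end

section
/- ℒ₂-gain bound from the differential dissipation inequality: Let P be a real symmetric positive definite n×n matrix, γ > 0 a real number, x : [0,∞) → ℝⁿ a differentiable function, and z : [0,∞) → ℝˡ, w : [0,∞) → ℝ^q continuous functions such that for all t ≥ 0 the derivative of t ↦ x(t)ᵀPx(t) plus γ⁻¹‖z(t)‖² minus γ‖w(t)‖² is at most 0. Then for every T ≥ 0, √(∫₀ᵀ ‖z(t)‖² dt) ≤ γ·√(∫₀ᵀ ‖w(t)‖² dt) + √(γ·x(0)ᵀPx(0)). -/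
/-!
Adding `∫₀ᵗ (γ⁻¹‖z‖² - γ‖w‖²)` to the storage function `V = xᵀPx` gives a function whose
derivative is nonpositive, so `V T + γ⁻¹‖z‖²_T - γ‖w‖²_T ≤ V 0`. As `V T ≥ 0`, multiplying
by `γ` yields `‖z‖²_T ≤ γ²‖w‖²_T + γ V 0`, and the square root is subadditive.
-/

open Matrix Set MeasureTheory intervalIntegral

section DotProduct

variable {𝕜 E ι : Type*} [NontriviallyNormedField 𝕜] [NormedAddCommGroup E] [NormedSpace 𝕜 E]
  [Fintype ι] {u v : E → ι → 𝕜} {t : E}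

theorem DifferentiableAt.dotProduct (hu : DifferentiableAt 𝕜 u t) (hv : DifferentiableAt 𝕜 v t) :
    DifferentiableAt 𝕜 (fun s => u s ⬝ᵥ v s) t := by
  simp only [_root_.dotProduct]
  exact DifferentiableAt.fun_sum fun i _ =>
    (differentiableAt_pi.1 hu i).fun_mul (differentiableAt_pi.1 hv i)

theorem DifferentiableAt.mulVec (A : Matrix ι ι 𝕜) (hv : DifferentiableAt 𝕜 v t) :
    DifferentiableAt 𝕜 (fun s => A *ᵥ v s) t :=
  differentiableAt_pi.2 fun i => (differentiableAt_const (A i)).dotProduct hv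

end DotProduct

theorem Real.sqrt_add_le_add_sqrt (a b : ℝ) : √(a + b) ≤ √a + √b := by
  rcases le_total 0 b with hb | hb
  · rcases le_total 0 a with ha | ha
    · rw [Real.sqrt_le_iff]
      refine ⟨by positivity, ?_⟩
      nlinarith [Real.sq_sqrt ha, Real.sq_sqrt hb, Real.sqrt_nonneg a, Real.sqrt_nonneg b]
    · calc √(a + b) ≤ √b := Real.sqrt_le_sqrt (by linarith)
        _ ≤ √a + √b := le_add_of_nonneg_left (Real.sqrt_nonneg a)
  · calc √(a + b) ≤ √a := Real.sqrt_le_sqrt (by linarith)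
      _ ≤ √a + √b := le_add_of_nonneg_right (Real.sqrt_nonneg b)

theorem Real.sqrt_le_mul_sqrt_add_sqrt_of_inv_mul_sub_mul_le {γ A B c : ℝ} (hγ : 0 < γ)
    (h : γ⁻¹ * A - γ * B ≤ c) : √A ≤ γ * √B + √(γ * c) := by
  have hA : A ≤ γ ^ 2 * B + γ * c := by
    have := mul_le_mul_of_nonneg_left h hγ.le
    rw [mul_sub, mul_inv_cancel_left₀ hγ.ne'] at this
    linarith
  calc √A ≤ √(γ ^ 2 * B + γ * c) := Real.sqrt_le_sqrt hA
    _ ≤ √(γ ^ 2 * B) + √(γ * c) := Real.sqrt_add_le_add_sqrt _ _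
    _ = γ * √B + √(γ * c) := by rw [Real.sqrt_mul (sq_nonneg γ), Real.sqrt_sq hγ.le]

theorem add_integral_le_of_deriv_add_nonpos {V s : ℝ → ℝ} {a b : ℝ} (hab : a ≤ b)
    (hV : ∀ t ∈ Icc a b, DifferentiableAt ℝ V t) (hs : IntegrableOn s (Icc a b))
    (hdiss : ∀ t ∈ Ioo a b, deriv V t + s t ≤ 0) :
    V b + ∫ t in a..b, s t ≤ V a := by
  have hsub : V b - V a ≤ ∫ t in a..b, -s t :=
    sub_le_integral_of_hasDeriv_right_of_le hab
      (fun t ht => (hV t ht).continuousAt.continuousWithinAt)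
      (fun t ht => (hV t (Ioo_subset_Icc_self ht)).hasDerivAt.hasDerivWithinAt) hs.neg
      (fun t ht => by linarith [hdiss t ht])
  rw [intervalIntegral.integral_neg] at hsub
  linarith

theorem L2_gain_bound_general (n l q : ℕ)
    (P : Matrix (Fin n) (Fin n) ℝ)
    (hPpd : ∀ v : Fin n → ℝ, v ≠ 0 → 0 < v ⬝ᵥ P.mulVec v)
    (γ : ℝ) (hγ : 0 < γ)
    (x : ℝ → Fin n → ℝ) (hx : ∀ t, 0 ≤ t → DifferentiableAt ℝ x t)
    (z : ℝ → Fin l → ℝ) (hz : Continuous z)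
    (w : ℝ → Fin q → ℝ) (hw : Continuous w)
    (hdiss : ∀ t, 0 ≤ t →
      deriv (fun s => x s ⬝ᵥ P.mulVec (x s)) t + γ⁻¹ * (z t ⬝ᵥ z t)
        - γ * (w t ⬝ᵥ w t) ≤ 0) :
    ∀ T : ℝ, 0 ≤ T →
      Real.sqrt (∫ t in (0:ℝ)..T, z t ⬝ᵥ z t) ≤
        γ * Real.sqrt (∫ t in (0:ℝ)..T, w t ⬝ᵥ w t)
        + Real.sqrt (γ * (x 0 ⬝ᵥ P.mulVec (x 0))) := by
  intro T hT
  have hzz := (hz.dotProduct hz).intervalIntegrable (μ := volume) 0 T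
  have hww := (hw.dotProduct hw).intervalIntegrable (μ := volume) 0 T
  have hstorage := add_integral_le_of_deriv_add_nonpos hT
    (s := fun t => γ⁻¹ * (z t ⬝ᵥ z t) - γ * (w t ⬝ᵥ w t))
    (fun t ht => (hx t ht.1).dotProduct ((hx t ht.1).mulVec P))
    (((hz.dotProduct hz).const_mul _).sub ((hw.dotProduct hw).const_mul _)).integrableOn_Icc
    (fun t ht => by linarith [hdiss t ht.1.le])
  rw [intervalIntegral.integral_sub (hzz.const_mul _) (hww.const_mul _),
    intervalIntegral.integral_const_mul, intervalIntegral.integral_const_mul] at hstorage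
  have hVT : 0 ≤ x T ⬝ᵥ P *ᵥ x T := by
    rcases eq_or_ne (x T) 0 with h0 | hne
    · simp [h0]
    · exact (hPpd _ hne).le
  exact Real.sqrt_le_mul_sqrt_add_sqrt_of_inv_mul_sub_mul_le hγ (by linarith)

/-- ℒ₂-gain bound from the differential dissipation inequality.
Squared Euclidean norms `‖v‖²` are written as dot products `v ⬝ᵥ v`. -/
theorem L2_gain_bound (n l q : ℕ)
    (P : Matrix (Fin n) (Fin n) ℝ) (hPsymm : P.IsSymm)
    (hPpd : ∀ v : Fin n → ℝ, v ≠ 0 → 0 < v ⬝ᵥ P.mulVec v)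
    (γ : ℝ) (hγ : 0 < γ)
    (x : ℝ → Fin n → ℝ) (hx : ∀ t, 0 ≤ t → DifferentiableAt ℝ x t)
    (z : ℝ → Fin l → ℝ) (hz : Continuous z)
    (w : ℝ → Fin q → ℝ) (hw : Continuous w)
    (hdiss : ∀ t, 0 ≤ t →
      deriv (fun s => x s ⬝ᵥ P.mulVec (x s)) t + γ⁻¹ * (z t ⬝ᵥ z t)
        - γ * (w t ⬝ᵥ w t) ≤ 0) :
    ∀ T : ℝ, 0 ≤ T →
      Real.sqrt (∫ t in (0:ℝ)..T, z t ⬝ᵥ z t) ≤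
        γ * Real.sqrt (∫ t in (0:ℝ)..T, w t ⬝ᵥ w t)
        + Real.sqrt (γ * (x 0 ⬝ᵥ P.mulVec (x 0))) :=
  L2_gain_bound_general n l q P hPpd γ hγ x hx z hz w hw hdiss
end
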